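/- arXiv:1904.08802 — 8 statements merged into one kernel-verified Lean document; each statement's English description precedes it below -/
import Mathlib

section
/- Let Σ be a varietor on a category C with free-algebra monad Σ◇ (unit η, free algebra (Σ◇I, α_I) on I), and assume C is cocomplete and cowellpowered with an (E,M)-factorisation system in which E consists of epimorphisms. A Σ-tree automaton A = (Q,δ,i,o) is minimal if and only if A (with its quotient map given by the reachability map rch_A) is the minimisation of the automaton (Σ◇I, α_I, η_I, L(A)). -/
open CategoryTheory CategoryTheory.Limits

universe v u

namespace TreeAutPaper

variable {C : Type u} [Category.{v} C]

/-- A representative of a quotient of `X` lying in the class `E`: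
an epimorphism out of `X` belonging to `E`. -/
structure EQuot (E : MorphismProperty C) (X : C) where
  obj : C
  hom : X ⟶ obj
  epi : Epi hom
  mem : E hom

/-- The order on quotients: `q ≤ r` iff `r = h ∘ q` for some `h`. -/
def EQuot.le {E : MorphismProperty C} {X : C} (q r : EQuot E X) : Prop :=
  ∃ h : q.obj ⟶ r.obj, q.hom ≫ h = r.hom

/-- Two quotient representatives are equivalent when each is below the other. -/
def EQuot.equiv {E : MorphismProperty C} {X : C} (q r : EQuot E X) : Prop :=
  q.le r ∧ r.le q

/-- `C` is cowellpowered: quotients (epimorphisms out of an object, up to equivalence)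
of every object form a set (an essentially `v`-small collection). -/
def Cowellpowered (C : Type u) [Category.{v} C] : Prop :=
  ∀ X : C, Small.{v} (Quot (fun q r : EQuot (⊤ : MorphismProperty C) X => EQuot.equiv q r))

/-- An `(E,M)`-factorisation system: both classes are closed under composition with
isomorphisms, every morphism factors as an `E`-morphism followed by an `M`-morphism, and
we have a unique diagonal fill-in property. -/
structure IsFactorizationSystem (E M : MorphismProperty C) : Prop where
  respectsIso_E : E.RespectsIso
  respectsIso_M : M.RespectsIso
  factor : ∀ {X Y : C} (f : X ⟶ Y), ∃ (Z : C) (e : X ⟶ Z) (m : Z ⟶ Y), E e ∧ M m ∧ e ≫ m = f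
  diag : ∀ {A B X Y : C} (e : A ⟶ B) (m : X ⟶ Y) (f : A ⟶ X) (g : B ⟶ Y),
    E e → M m → f ≫ m = e ≫ g → ∃! d : B ⟶ X, e ≫ d = f ∧ d ≫ m = g

/-- `S` preserves `E`-cointersections, i.e. wide pushouts of families of epimorphisms
lying in `E`. -/
def PreservesECointersections (E : MorphismProperty C) (S : C ⥤ C) : Prop :=
  ∀ (J : Type (max u v)) (X : C) (objs : J → C) (arrows : ∀ j : J, X ⟶ objs j),
    (∀ j, E (arrows j)) → (∀ j, Epi (arrows j)) →
    ∀ c : Cocone (WidePushoutShape.wideSpan X objs arrows),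
      Nonempty (IsColimit c) → Nonempty (IsColimit (S.mapCocone c))

/-- `f : ΣX ⟶ Y` factors through (the image under `Σ` of) the quotient `q`. -/
def FactorsThru {E : MorphismProperty C} (S : C ⥤ C) {X Y : C} (f : S.obj X ⟶ Y)
    (q : EQuot E X) : Prop :=
  ∃ g : S.obj q.obj ⟶ Y, S.map q.hom ≫ g = f

/-- `q` is the `E`-cobase of `f : ΣX ⟶ Y`: the greatest quotient of `X` in `E`
through whose `Σ`-image `f` factors. -/
def IsCobase (E : MorphismProperty C) (S : C ⥤ C) {X Y : C} (f : S.obj X ⟶ Y)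
    (q : EQuot E X) : Prop :=
  FactorsThru S f q ∧ ∀ r : EQuot E X, FactorsThru S f r → r.le q

variable (Sg : C ⥤ C)

/-- A `Σ`-tree automaton over input object `I` and output object `O`. -/
structure TreeAut (I O : C) where
  Q : Endofunctor.Algebra Sg
  i : I ⟶ Q.a
  o : Q.a ⟶ O

variable {Sg} {I O : C}

/-- `h` is a homomorphism of automata from `A` to `B`. -/
structure IsAutHom (A B : TreeAut Sg I O) (h : A.Q.a ⟶ B.Q.a) : Prop where
  alg : Sg.map h ≫ B.Q.str = A.Q.str ≫ h
  hi : A.i ≫ h = B.i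
  ho : h ≫ B.o = A.o

/-- `(B, q)` is a quotient automaton of `A`: `q` is an epimorphism lying in `E`
which is a homomorphism of automata. -/
structure IsQuotAut (E : MorphismProperty C) (A B : TreeAut Sg I O)
    (q : A.Q.a ⟶ B.Q.a) : Prop where
  isHom : IsAutHom A B q
  epi : Epi q
  mem : E q

/-- `(M, qm)` is the minimisation of `A`: a quotient automaton through which every
quotient automaton of `A` factors by a (necessarily unique) automaton homomorphism. -/
def IsMinimisation (E : MorphismProperty C) (A M : TreeAut Sg I O)
    (qm : A.Q.a ⟶ M.Q.a) : Prop :=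
  IsQuotAut E A M qm ∧
    ∀ (B : TreeAut Sg I O) (q' : A.Q.a ⟶ B.Q.a), IsQuotAut E A B q' →
      ∃! h : B.Q.a ⟶ M.Q.a, IsAutHom B M h ∧ q' ≫ h = qm

/-- `A` is simple: every quotient automaton of `A` has its quotient map an isomorphism. -/
def IsSimple (E : MorphismProperty C) (A : TreeAut Sg I O) : Prop :=
  ∀ (B : TreeAut Sg I O) (q : A.Q.a ⟶ B.Q.a), IsQuotAut E A B q → IsIso q

section Varietor

variable (Fr : C ⥤ Endofunctor.Algebra Sg) (adj : Fr ⊣ Endofunctor.Algebra.forget Sg)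

/-- The reachability map of an automaton: the underlying morphism of the adjoint
transpose of the initial-state assignment. -/
def rch (A : TreeAut Sg I O) : (Fr.obj I).a ⟶ A.Q.a :=
  ((adj.homEquiv I A.Q).symm A.i).f

/-- The language of an automaton. -/
def lang (A : TreeAut Sg I O) : (Fr.obj I).a ⟶ O :=
  rch Fr adj A ≫ A.o

/-- The automaton `(Σ◇I, α_I, η_I, L)` on the free `Σ`-algebra over `I`. -/
def freeAut (L : (Fr.obj I).a ⟶ O) : TreeAut Sg I O :=
  { Q := Fr.obj I
    i := adj.unit.app I
    o := L }

/-- `A` is reachable: its reachability map lies in `E`. -/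
def Reachable (E : MorphismProperty C) (A : TreeAut Sg I O) : Prop :=
  E (rch Fr adj A)

/-- `A` is minimal: reachable, and every reachable automaton with the same language
admits a (necessarily unique) automaton homomorphism into `A`. -/
def Minimal (E : MorphismProperty C) (A : TreeAut Sg I O) : Prop :=
  Reachable Fr adj E A ∧
    ∀ B : TreeAut Sg I O, Reachable Fr adj E B → lang Fr adj B = lang Fr adj A →
      ∃! h : B.Q.a ⟶ A.Q.a, IsAutHom B A h

end Varietor

/-! Quotient automata of the free automaton `(Σ◇I, α_I, η_I, L)` are exactly the reachable
automata of language `L`, and their quotient maps are forced to be reachability maps by the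
universal property of the free algebra. Since every automaton homomorphism commutes with
reachability maps, the universal property of the minimisation of that free automaton is then
literally the defining property of a minimal automaton of language `L`. -/

section Reachability

variable {C : Type u} [Category.{v} C] {Sg : C ⥤ C}
  (Fr : C ⥤ Endofunctor.Algebra Sg) (adj : Fr ⊣ Endofunctor.Algebra.forget Sg) {I O : C}

lemma map_rch_comp_str (A : TreeAut Sg I O) :
    Sg.map (rch Fr adj A) ≫ A.Q.str = (Fr.obj I).str ≫ rch Fr adj A :=
  ((adj.homEquiv I A.Q).symm A.i).h

lemma unit_comp_rch (A : TreeAut Sg I O) : adj.unit.app I ≫ rch Fr adj A = A.i :=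
  (adj.homEquiv_unit _ _ _).symm.trans ((adj.homEquiv I A.Q).apply_symm_apply A.i)

lemma eq_rch_iff (A : TreeAut Sg I O) (h : (Fr.obj I).a ⟶ A.Q.a) :
    h = rch Fr adj A ↔
      Sg.map h ≫ A.Q.str = (Fr.obj I).str ≫ h ∧ adj.unit.app I ≫ h = A.i := by
  constructor
  · rintro rfl
    exact ⟨map_rch_comp_str Fr adj A, unit_comp_rch Fr adj A⟩
  · rintro ⟨halg, hunit⟩
    have hk : adj.homEquiv I A.Q ⟨h, halg⟩ = A.i := (adj.homEquiv_unit _ _ _).trans hunit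
    exact congrArg Endofunctor.Algebra.Hom.f ((adj.homEquiv I A.Q).eq_symm_apply.mpr hk)

lemma isAutHom_freeAut_iff (L : (Fr.obj I).a ⟶ O) (A : TreeAut Sg I O)
    (h : (Fr.obj I).a ⟶ A.Q.a) :
    IsAutHom (freeAut Fr adj L) A h ↔ h = rch Fr adj A ∧ lang Fr adj A = L := by
  constructor
  · rintro ⟨halg, hi, ho⟩
    obtain rfl := (eq_rch_iff Fr adj A h).mpr ⟨halg, hi⟩
    exact ⟨rfl, ho⟩
  · rintro ⟨rfl, rfl⟩
    exact ⟨map_rch_comp_str Fr adj A, unit_comp_rch Fr adj A, rfl⟩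

lemma rch_comp_of_isAutHom {A B : TreeAut Sg I O} {h : A.Q.a ⟶ B.Q.a} (hh : IsAutHom A B h) :
    rch Fr adj A ≫ h = rch Fr adj B := by
  refine (eq_rch_iff Fr adj B _).mpr ⟨?_, ?_⟩
  · rw [Sg.map_comp, Category.assoc, hh.alg, ← Category.assoc, map_rch_comp_str, Category.assoc]
  · exact (Category.assoc _ _ _).symm.trans (by rw [unit_comp_rch, hh.hi])

lemma isQuotAut_freeAut_iff {E : MorphismProperty C} (hE : ∀ ⦃X Y : C⦄ (f : X ⟶ Y), E f → Epi f)
    (L : (Fr.obj I).a ⟶ O) (A : TreeAut Sg I O) (q : (Fr.obj I).a ⟶ A.Q.a) :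
    IsQuotAut E (freeAut Fr adj L) A q ↔
      q = rch Fr adj A ∧ lang Fr adj A = L ∧ Reachable Fr adj E A := by
  constructor
  · rintro ⟨hhom, -, hmem⟩
    obtain ⟨rfl, hlang⟩ := (isAutHom_freeAut_iff Fr adj L A q).mp hhom
    exact ⟨rfl, hlang, hmem⟩
  · rintro ⟨rfl, hlang, hreach⟩
    exact ⟨(isAutHom_freeAut_iff Fr adj L A _).mpr ⟨rfl, hlang⟩, hE _ hreach, hreach⟩

lemma isAutHom_and_rch_comp_iff {A B : TreeAut Sg I O} (h : A.Q.a ⟶ B.Q.a) :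
    IsAutHom A B h ∧ rch Fr adj A ≫ h = rch Fr adj B ↔ IsAutHom A B h :=
  and_iff_left_of_imp (rch_comp_of_isAutHom Fr adj)

end Reachability

theorem minimal_iff_minimisation_of_freeAut_general
    {C : Type u} [Category.{v} C]
    (E : MorphismProperty C)
    (hE : ∀ ⦃X Y : C⦄ (f : X ⟶ Y), E f → Epi f)
    {Sg : C ⥤ C} (Fr : C ⥤ Endofunctor.Algebra Sg)
    (adj : Fr ⊣ Endofunctor.Algebra.forget Sg)
    {I O : C} (A : TreeAut Sg I O) :
    Minimal Fr adj E A ↔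
      IsMinimisation E (freeAut Fr adj (lang Fr adj A)) A (rch Fr adj A) := by
  constructor
  · rintro ⟨hreach, hmin⟩
    refine ⟨(isQuotAut_freeAut_iff Fr adj hE _ A _).mpr ⟨rfl, rfl, hreach⟩, fun B q hq => ?_⟩
    obtain ⟨rfl, hlang, hreachB⟩ := (isQuotAut_freeAut_iff Fr adj hE _ B q).mp hq
    exact (existsUnique_congr (isAutHom_and_rch_comp_iff Fr adj)).mpr (hmin B hreachB hlang)
  · rintro ⟨hquot, huniv⟩
    refine ⟨((isQuotAut_freeAut_iff Fr adj hE _ A _).mp hquot).2.2, fun B hreachB hlang => ?_⟩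
    have hquotB := (isQuotAut_freeAut_iff Fr adj hE _ B (rch Fr adj B)).mpr ⟨rfl, hlang, hreachB⟩
    exact (existsUnique_congr (isAutHom_and_rch_comp_iff Fr adj)).mp (huniv B _ hquotB)

/-- Under the standing assumptions (C cocomplete and cowellpowered,
with an (E,M)-factorisation system where E consists of epimorphisms, Σ a varietor
witnessed by the adjunction `adj`), a Σ-tree automaton `A` is minimal if and only if
`A`, with quotient map its reachability map, is the minimisation of the automaton
`(Σ◇I, α_I, η_I, L(A))`. -/
theorem minimal_iff_minimisation_of_freeAut
    {C : Type u} [Category.{v} C] [HasColimits C] (hcwp : Cowellpowered C)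
    (E M : MorphismProperty C) (hfs : IsFactorizationSystem E M)
    (hE : ∀ ⦃X Y : C⦄ (f : X ⟶ Y), E f → Epi f)
    {Sg : C ⥤ C} (Fr : C ⥤ Endofunctor.Algebra Sg)
    (adj : Fr ⊣ Endofunctor.Algebra.forget Sg)
    {I O : C} (A : TreeAut Sg I O) :
    Minimal Fr adj E A ↔
      IsMinimisation E (freeAut Fr adj (lang Fr adj A)) A (rch Fr adj A) :=
  minimal_iff_minimisation_of_freeAut_general E hE Fr adj A

end TreeAutPaper
end

section
/- Let C be cocomplete and cowellpowered with an (E,M)-factorisation system in which E consists of epimorphisms, and suppose the endofunctor Σ : C → C preserves E-cointersections (wide pushouts of epimorphisms in E). Then every morphism f : ΣX → Y in C has an E-cobase, and it is given by the cointersection (join in the complete lattice Quot_E(X)) of the set {q ∈ Quot_E(X) | there exists g with g ∘ Σq = f}. -/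
open CategoryTheory CategoryTheory.Limits

universe v u

namespace TreeAutPaper

variable {C : Type u} [Category.{v} C]

variable (Sg : C ⥤ C)

variable {Sg} {I O : C}

/-!
By cowellpoweredness the quotients of `X` through which `f` factors have a set of
representatives, so their cointersection (wide pushout) exists; it is their join by the universal
property. It lies in `E` because the left class of a factorisation system is closed under wide
pushouts: writing the head map as `e ≫ m`, the diagonal fill-ins glue to a section of `m`, which is
also a retraction by uniqueness of diagonals. Finally `Σ` carries the wide pushout to a wide
pushout, out of which the factorisations of `f` through the individual quotients glue to one.
-/

theorem hasWidePushout_of_small [HasColimits C] {J : Type*} [Small.{v} J] (B : C)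
    (objs : J → C) (arrows : ∀ j, B ⟶ objs j) : HasWidePushout B objs arrows :=
  have := hasColimitsOfShape_of_equivalence
    (WidePushoutShape.equivalenceOfEquiv J (equivShrink J).symm) (C := C)
  inferInstance

theorem epi_widePushout_head {J : Type*} {B : C} {objs : J → C} (arrows : ∀ j, B ⟶ objs j)
    [HasWidePushout B objs arrows] [∀ j, Epi (arrows j)] : Epi (WidePushout.head arrows) :=
  ⟨fun g h hgh ↦ WidePushout.hom_ext _ _ _
    (fun j ↦ by rw [← cancel_epi (arrows j), WidePushout.arrow_ι_assoc,
      WidePushout.arrow_ι_assoc, hgh]) hgh⟩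

namespace IsFactorizationSystem

variable {E M : MorphismProperty C} (hfs : IsFactorizationSystem E M)
include hfs

theorem eq_id_of_fac {A Z Y : C} {e : A ⟶ Z} {m : Z ⟶ Y} (he : E e) (hm : M m) {x : Z ⟶ Z}
    (hex : e ≫ x = e) (hxm : x ≫ m = m) : x = 𝟙 Z :=
  (hfs.diag e m e m he hm rfl).unique ⟨hex, hxm⟩ ⟨Category.comp_id e, Category.id_comp m⟩

theorem widePushout_head_mem {J : Type*} {B : C} {objs : J → C} (arrows : ∀ j, B ⟶ objs j)
    [HasWidePushout B objs arrows] (harrows : ∀ j, E (arrows j)) :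
    E (WidePushout.head arrows) := by
  obtain ⟨Z, e, m, he, hm, hem⟩ := hfs.factor (WidePushout.head arrows)
  have lift (j : J) : ∃ d, arrows j ≫ d = e ∧ d ≫ m = WidePushout.ι arrows j :=
    (hfs.diag (arrows j) m e _ (harrows j) hm (by rw [hem, WidePushout.arrow_ι])).exists
  choose d hd₁ hd₂ using lift
  let t := WidePushout.desc e d hd₁
  have htm : t ≫ m = 𝟙 _ := WidePushout.hom_ext _ _ _
    (fun j ↦ by simp [t, WidePushout.ι_desc_assoc, hd₂])
    (by simp [t, WidePushout.head_desc_assoc, hem])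
  have hmt : m ≫ t = 𝟙 Z := hfs.eq_id_of_fac he hm
    (by rw [← Category.assoc, hem, WidePushout.head_desc])
    (by rw [Category.assoc, htm, Category.comp_id])
  have : IsIso m := ⟨t, hmt, htm⟩
  have := hfs.respectsIso_E
  exact hem ▸ MorphismProperty.RespectsIso.postcomp E m e he

end IsFactorizationSystem

namespace EQuot

variable {E : MorphismProperty C} {X : C}

theorem le_trans {q r s : EQuot E X} : q.le r → r.le s → q.le s
  | ⟨h, hh⟩, ⟨k, hk⟩ => ⟨h ≫ k, by rw [← Category.assoc, hh, hk]⟩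

theorem equiv_equivalence : Equivalence (EQuot.equiv : EQuot E X → EQuot E X → Prop) where
  refl _ := ⟨⟨𝟙 _, Category.comp_id _⟩, ⟨𝟙 _, Category.comp_id _⟩⟩
  symm h := ⟨h.2, h.1⟩
  trans h k := ⟨EQuot.le_trans h.1 k.1, EQuot.le_trans k.2 h.2⟩

def toTop (q : EQuot E X) : EQuot (⊤ : MorphismProperty C) X :=
  ⟨q.obj, q.hom, q.epi, trivial⟩

variable {M : MorphismProperty C}

noncomputable def cointersection (hfs : IsFactorizationSystem E M) {J : Type*}
    (q : J → EQuot E X) [HasWidePushout X (fun j ↦ (q j).obj) (fun j ↦ (q j).hom)] :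
    EQuot E X where
  obj := widePushout X (fun j ↦ (q j).obj) (fun j ↦ (q j).hom)
  hom := WidePushout.head _
  epi := have := fun j ↦ (q j).epi; epi_widePushout_head _
  mem := hfs.widePushout_head_mem _ fun j ↦ (q j).mem

variable (hfs : IsFactorizationSystem E M)

theorem le_cointersection {J : Type*} (q : J → EQuot E X)
    [HasWidePushout X (fun j ↦ (q j).obj) (fun j ↦ (q j).hom)] (j : J) :
    (q j).le (cointersection hfs q) :=
  ⟨WidePushout.ι (fun j ↦ (q j).hom) j, WidePushout.arrow_ι (fun j ↦ (q j).hom) j⟩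

theorem cointersection_le {J : Type*} {q : J → EQuot E X}
    [HasWidePushout X (fun j ↦ (q j).obj) (fun j ↦ (q j).hom)] {u : EQuot E X}
    (h : ∀ j, (q j).le u) : (cointersection hfs q).le u := by
  choose k hk using h
  exact ⟨WidePushout.desc u.hom k hk, WidePushout.head_desc (fun j ↦ (q j).hom) u.hom k hk⟩

theorem factorsThru_cointersection {S : C ⥤ C} (hpres : PreservesECointersections E S)
    {J : Type (max u v)} {q : J → EQuot E X}
    [HasWidePushout X (fun j ↦ (q j).obj) (fun j ↦ (q j).hom)] {Y : C} {f : S.obj X ⟶ Y}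
    (h : ∀ j, FactorsThru S f (q j)) : FactorsThru S f (cointersection hfs q) := by
  choose g hg using h
  obtain ⟨hc⟩ := hpres J X _ _ (fun j ↦ (q j).mem) (fun j ↦ (q j).epi) _ ⟨colimit.isColimit _⟩
  exact ⟨hc.desc (WidePushoutShape.mkCocone f g hg), hc.fac _ none⟩

end EQuot

theorem Cowellpowered.exists_small_cofinal_family (hcwp : Cowellpowered C)
    {E : MorphismProperty C} {X : C} (P : EQuot E X → Prop) :
    ∃ (J : Type (max u v)) (_ : Small.{v} J) (q : J → EQuot E X),
      (∀ j, P (q j)) ∧ ∀ r, P r → ∃ j, r.le (q j) := by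
  have := hcwp X
  let R : EQuot (⊤ : MorphismProperty C) X → EQuot ⊤ X → Prop := EQuot.equiv
  let J := {c : Quot R // ∃ r, P r ∧ Quot.mk R r.toTop = c}
  refine ⟨J, inferInstance, fun j ↦ j.2.choose, fun j ↦ j.2.choose_spec.1, fun r hr ↦ ?_⟩
  let j : J := ⟨_, r, hr, rfl⟩
  have hj : Quot.mk R j.2.choose.toTop = Quot.mk R r.toTop := j.2.choose_spec.2
  exact ⟨j, (EQuot.equiv_equivalence.eqvGen_iff.mp (Quot.eqvGen_exact hj)).2⟩

theorem cobase_exists_general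
    {C : Type u} [Category.{v} C] [HasColimits C] (hcwp : Cowellpowered C)
    (E M : MorphismProperty C) (hfs : IsFactorizationSystem E M)
    (Sg : C ⥤ C) (hpres : PreservesECointersections E Sg)
    {X Y : C} (f : Sg.obj X ⟶ Y) :
    ∃ q : EQuot E X, IsCobase E Sg f q ∧
      (∀ r : EQuot E X, FactorsThru Sg f r → r.le q) ∧
      (∀ u : EQuot E X, (∀ r : EQuot E X, FactorsThru Sg f r → r.le u) → q.le u) := by
  obtain ⟨J, _, q, hqf, hq⟩ := hcwp.exists_small_cofinal_family (E := E) (FactorsThru Sg f)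
  have := hasWidePushout_of_small X (fun j ↦ (q j).obj) (fun j ↦ (q j).hom)
  have hub (r : EQuot E X) (hr : FactorsThru Sg f r) : r.le (EQuot.cointersection hfs q) :=
    have ⟨j, hj⟩ := hq r hr
    EQuot.le_trans hj (EQuot.le_cointersection hfs q j)
  exact ⟨EQuot.cointersection hfs q, ⟨EQuot.factorsThru_cointersection hfs hpres hqf, hub⟩, hub,
    fun u hu ↦ EQuot.cointersection_le hfs fun j ↦ hu _ (hqf j)⟩

/-- **Existence of cobases.** If `Σ` preserves `E`-cointersections, then
every morphism `f : ΣX ⟶ Y` has an `E`-cobase, and the cobase is the cointersection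
(i.e. the join, least upper bound, in the complete lattice `Quot_E(X)`) of the set of
quotients `q` with `f = g ∘ Σq` for some `g`. -/
theorem cobase_exists
    {C : Type u} [Category.{v} C] [HasColimits C] (hcwp : Cowellpowered C)
    (E M : MorphismProperty C) (hfs : IsFactorizationSystem E M)
    (hE : ∀ ⦃X Y : C⦄ (f : X ⟶ Y), E f → Epi f)
    (Sg : C ⥤ C) (hpres : PreservesECointersections E Sg)
    {X Y : C} (f : Sg.obj X ⟶ Y) :
    ∃ q : EQuot E X, IsCobase E Sg f q ∧
      (∀ r : EQuot E X, FactorsThru Sg f r → r.le q) ∧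
      (∀ u : EQuot E X, (∀ r : EQuot E X, FactorsThru Sg f r → r.le u) → q.le u) :=
  cobase_exists_general hcwp E M hfs Sg hpres f

end TreeAutPaper
end

section
/- Let C be cocomplete and cowellpowered with an (E,M)-factorisation system in which E consists of epimorphisms, and suppose Σ : C → C preserves E-cointersections. For any Σ-algebra (Q,δ) and any quotient q : Q ↠ Q' in Quot_E(Q), one has q ≤ Θ_δ(q) if and only if there exists a Σ-algebra structure δ' : ΣQ' → Q' making q a Σ-algebra homomorphism from (Q,δ) to (Q',δ'). -/
open CategoryTheory CategoryTheory.Limits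

universe v u

namespace TreeAutPaper

variable {C : Type u} [Category.{v} C]

variable (Sg : C ⥤ C)

variable {Sg} {I O : C}

/-- Suppose `Σ` preserves `E`-cointersections. For a `Σ`-algebra
`(Q,δ)` and a quotient `q ∈ Quot_E(Q)`, with `t = Θ_δ(q)` the `E`-cobase of `q ∘ δ`:
`q ≤ Θ_δ(q)` iff there is an algebra structure `δ'` on the codomain of `q` turning `q`
into a `Σ`-algebra homomorphism `(Q,δ) → (Q',δ')`. -/
theorem le_theta_iff_algebra_structure
    {C : Type u} [Category.{v} C] [HasColimits C] (hcwp : Cowellpowered C)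
    (E M : MorphismProperty C) (hfs : IsFactorizationSystem E M)
    (hE : ∀ ⦃X Y : C⦄ (f : X ⟶ Y), E f → Epi f)
    (Sg : C ⥤ C) (hpres : PreservesECointersections E Sg)
    {Q : C} (δ : Sg.obj Q ⟶ Q) (q : EQuot E Q)
    (t : EQuot E Q) (ht : IsCobase E Sg (δ ≫ q.hom) t) :
    q.le t ↔ ∃ δ' : Sg.obj q.obj ⟶ q.obj, Sg.map q.hom ≫ δ' = δ ≫ q.hom := by
  constructor
  · rintro ⟨h, hh⟩
    obtain ⟨g, hg⟩ := ht.1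
    exact ⟨Sg.map h ≫ g, by rw [← Sg.map_comp_assoc, hh, hg]⟩
  · rintro ⟨δ', hδ'⟩
    exact ht.2 q ⟨δ', hδ'⟩

end TreeAutPaper
end

section
/- Let C be cocomplete and cowellpowered with an (E,M)-factorisation system in which E consists of epimorphisms, and suppose Σ : C → C preserves E-cointersections. Let (Q,δ,i,o) be a Σ-tree automaton with o ∈ E, and let (Q',δ',i',o') together with q : Q ↠ Q' in E be a quotient automaton of (Q,δ,i,o). Then (Q',δ',i',o') is simple if and only if it is the minimisation of (Q,δ,i,o). -/
/-!
A quotient `r` of the minimisation `(B, q)` yields the quotient `q ≫ r` of `A`, which factors back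
through `q`; since `q` and `r` are epimorphisms, the factorising map is inverse to `r`.

Conversely, let `B` be simple and `q'` any other quotient of `A`. The cointersection (wide pushout)
of `q` and `q'` is preserved by `Σ`, so it carries an automaton structure making both legs
automaton homomorphisms. Its legs are again in `E`, because `E` is the left lifting class of `M`.
So the leg out of `B` is a quotient automaton of `B`, hence an isomorphism, and the other leg
followed by its inverse factors `q'` through `q`.
-/

open CategoryTheory CategoryTheory.Limits

universe v u

namespace TreeAutPaper

variable {C : Type u} [Category.{v} C]

variable (Sg : C ⥤ C)

variable {Sg} {I O : C}

namespace IsFactorizationSystem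

variable {E M : MorphismProperty C}

lemma llp_le (hfs : IsFactorizationSystem E M) : M.llp ≤ E := by
  intro X Y f hf
  obtain ⟨Z, e, m, he, hm, rfl⟩ := hfs.factor f
  have := hf m hm
  have sq : CommSq e (e ≫ m) m (𝟙 Y) := ⟨by simp⟩
  obtain ⟨d, hed, hdm⟩ : ∃ d, (e ≫ m) ≫ d = e ∧ d ≫ m = 𝟙 Y :=
    ⟨sq.lift, sq.fac_left, sq.fac_right⟩
  -- `m ≫ d` and `𝟙` both fill the square `e ≫ m = e ≫ m`, so `m` is an isomorphism.
  have hmd : m ≫ d = 𝟙 Z := by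
    obtain ⟨_, -, huniq⟩ := hfs.diag e m e m he hm rfl
    have hfill := huniq (m ≫ d)
      ⟨by rw [← Category.assoc, hed], by rw [Category.assoc, hdm, Category.comp_id]⟩
    exact hfill.trans (huniq (𝟙 Z) ⟨Category.comp_id e, Category.id_comp m⟩).symm
  have : IsIso m := ⟨d, hmd, hdm⟩
  have := hfs.respectsIso_E
  exact (E.cancel_right_of_respectsIso e m).mpr he

lemma le_llp (hfs : IsFactorizationSystem E M) : E ≤ M.llp := by
  intro A B e he X Y m hm
  refine ⟨fun {f g} sq => ?_⟩
  obtain ⟨d, ⟨hed, hdm⟩, -⟩ := hfs.diag e m f g he hm sq.w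
  exact ⟨⟨⟨d, hed, hdm⟩⟩⟩

lemma llp_eq (hfs : IsFactorizationSystem E M) : M.llp = E :=
  le_antisymm hfs.llp_le hfs.le_llp

lemma comp_mem (hfs : IsFactorizationSystem E M) {X Y Z : C} {f : X ⟶ Y} {g : Y ⟶ Z}
    (hf : E f) (hg : E g) : E (f ≫ g) := by
  rw [← hfs.llp_eq] at hf hg ⊢
  exact M.llp.comp_mem f g hf hg

end IsFactorizationSystem

section WidePushout

variable {J : Type*} {F : WidePushoutShape J ⥤ C} {c : Cocone F}

lemma epi_ι_of_isColimit (hc : IsColimit c) (hepi : ∀ j, Epi (F.map (.init j))) (j : J) :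
    Epi (c.ι.app (some j)) := by
  refine ⟨fun {W} g h hgh => hc.hom_ext ?_⟩
  have hnone : c.ι.app none ≫ g = c.ι.app none ≫ h := by
    rw [← c.w (.init j), Category.assoc, Category.assoc, hgh]
  rintro (_ | k)
  · exact hnone
  · apply (hepi k).left_cancellation
    simpa only [← Category.assoc, c.w] using hnone

lemma mem_ι_of_isColimit {E M : MorphismProperty C} (hfs : IsFactorizationSystem E M)
    (hc : IsColimit c) (hmem : ∀ j, E (F.map (.init j))) (hepi : ∀ j, Epi (F.map (.init j)))
    (j : J) : E (c.ι.app (some j)) := by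
  refine hfs.llp_le _ fun U V m hm => ⟨fun {u v} sq => ?_⟩
  have hlift k := hfs.le_llp _ (hmem k) m hm
  let sqk (k : J) : CommSq (F.map (.init j) ≫ u) (F.map (.init k)) m (c.ι.app (some k) ≫ v) :=
    ⟨by rw [Category.assoc, sq.w, ← Category.assoc, c.w, ← c.w (.init k), Category.assoc]⟩
  let d : c.pt ⟶ U := hc.desc <|
    WidePushoutShape.mkCocone (F.map (.init j) ≫ u) (fun k => (sqk k).lift)
      (fun k => (sqk k).fac_left)
  have hd k : c.ι.app (some k) ≫ d = (sqk k).lift := hc.fac _ (some k)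
  have hnone : c.ι.app none ≫ d = F.map (.init j) ≫ u := hc.fac _ none
  refine ⟨⟨⟨d, ?_, hc.hom_ext ?_⟩⟩⟩
  · rw [hd]
    exact (hepi j).left_cancellation _ _ (sqk j).fac_left
  · rintro (_ | k)
    · rw [← Category.assoc, hnone, Category.assoc, sq.w, ← Category.assoc, c.w]
    · rw [← Category.assoc, hd, (sqk k).fac_right]

end WidePushout

section Automata

lemma IsAutHom.comp {A B D : TreeAut Sg I O} {f : A.Q.a ⟶ B.Q.a} {g : B.Q.a ⟶ D.Q.a}
    (hf : IsAutHom A B f) (hg : IsAutHom B D g) : IsAutHom A D (f ≫ g) where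
  alg := by rw [Sg.map_comp, Category.assoc, hg.alg, ← Category.assoc, hf.alg, Category.assoc]
  hi := by rw [← Category.assoc, hf.hi, hg.hi]
  ho := by rw [Category.assoc, hg.ho, hf.ho]

lemma IsAutHom.inverse {A B : TreeAut Sg I O} {f : A.Q.a ⟶ B.Q.a} {g : B.Q.a ⟶ A.Q.a}
    (hf : IsAutHom A B f) (hfg : f ≫ g = 𝟙 _) (hgf : g ≫ f = 𝟙 _) : IsAutHom B A g where
  alg := by
    rw [← Category.comp_id A.Q.str, ← hfg, ← Category.assoc A.Q.str, ← hf.alg,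
      Category.assoc, ← Category.assoc (Sg.map g), ← Sg.map_comp, hgf, Sg.map_id,
      Category.id_comp]
  hi := by rw [← hf.hi, Category.assoc, hfg, Category.comp_id]
  ho := by rw [← hf.ho, ← Category.assoc, hgf, Category.id_comp]

lemma IsQuotAut.comp {E M : MorphismProperty C} (hfs : IsFactorizationSystem E M)
    {A B D : TreeAut Sg I O} {f : A.Q.a ⟶ B.Q.a} {g : B.Q.a ⟶ D.Q.a}
    (hf : IsQuotAut E A B f) (hg : IsQuotAut E B D g) : IsQuotAut E A D (f ≫ g) where
  isHom := hf.isHom.comp hg.isHom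
  epi := have := hf.epi; have := hg.epi; epi_comp f g
  mem := hfs.comp_mem hf.mem hg.mem

variable {J : Type*} {A : TreeAut Sg I O} {B : J → TreeAut Sg I O}
  {q : ∀ j, A.Q.a ⟶ (B j).Q.a}
  {c : Cocone (WidePushoutShape.wideSpan A.Q.a (fun j => (B j).Q.a) q)}

noncomputable def TreeAut.cointersection (hq : ∀ j, IsAutHom A (B j) (q j)) (hc : IsColimit c)
    (hSc : IsColimit (Sg.mapCocone c)) : TreeAut Sg I O where
  Q := ⟨c.pt, hSc.desc (WidePushoutShape.mkCocone (A.Q.str ≫ c.ι.app none)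
    (fun j => (B j).Q.str ≫ c.ι.app (some j)) fun j =>
      (Category.assoc _ _ _).symm.trans <| ((hq j).alg =≫ c.ι.app (some j)).trans <|
        (Category.assoc _ _ _).trans (A.Q.str ≫= c.w (.init j)))⟩
  i := A.i ≫ c.ι.app none
  o := hc.desc (WidePushoutShape.mkCocone A.o (fun j => (B j).o) fun j => (hq j).ho)

lemma isAutHom_ι_cointersection (hq : ∀ j, IsAutHom A (B j) (q j)) (hc : IsColimit c)
    (hSc : IsColimit (Sg.mapCocone c)) (j : J) :
    IsAutHom (B j) (TreeAut.cointersection hq hc hSc) (c.ι.app (some j)) where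
  alg := hSc.fac _ (some j)
  hi := by
    change (B j).i ≫ c.ι.app (some j) = A.i ≫ c.ι.app none
    rw [← (hq j).hi]
    exact (Category.assoc _ _ _).trans (A.i ≫= c.w (.init j))
  ho := hc.fac _ (some j)

lemma isQuotAut_ι_cointersection {E M : MorphismProperty C} (hfs : IsFactorizationSystem E M)
    (hq : ∀ j, IsQuotAut E A (B j) (q j)) (hc : IsColimit c) (hSc : IsColimit (Sg.mapCocone c))
    (j : J) :
    IsQuotAut E (B j) (TreeAut.cointersection (fun j => (hq j).isHom) hc hSc)
      (c.ι.app (some j)) where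
  isHom := isAutHom_ι_cointersection _ hc hSc j
  epi := epi_ι_of_isColimit hc (fun j => (hq j).epi) j
  mem := mem_ι_of_isColimit hfs hc (fun j => (hq j).mem) (fun j => (hq j).epi) j

end Automata

section Minimisation

variable {E M : MorphismProperty C} {A B : TreeAut Sg I O} {q : A.Q.a ⟶ B.Q.a}

lemma IsMinimisation.isSimple (hfs : IsFactorizationSystem E M)
    (hmin : IsMinimisation E A B q) : IsSimple E B := by
  intro D r hr
  obtain ⟨h, ⟨-, hqrh⟩, -⟩ := hmin.2 D (q ≫ r) (hmin.1.comp hfs hr)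
  have hrh : r ≫ h = 𝟙 _ :=
    hmin.1.epi.left_cancellation _ _ (by rw [← Category.assoc, hqrh, Category.comp_id])
  exact ⟨h, hrh, hr.epi.left_cancellation _ _
    (by rw [← Category.assoc, hrh, Category.id_comp, Category.comp_id])⟩

lemma IsSimple.exists_isAutHom_comp_eq {J : Type (max u v)}
    [HasColimitsOfShape (WidePushoutShape J) C] (hfs : IsFactorizationSystem E M)
    (hpres : PreservesECointersections E Sg) {B : J → TreeAut Sg I O}
    {q : ∀ j, A.Q.a ⟶ (B j).Q.a} (hq : ∀ j, IsQuotAut E A (B j) (q j)) {j₀ : J}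
    (hB : IsSimple E (B j₀)) (j : J) :
    ∃ h, IsAutHom (B j) (B j₀) h ∧ q j ≫ h = q j₀ := by
  obtain ⟨hSc⟩ := hpres J A.Q.a _ q (fun j => (hq j).mem) (fun j => (hq j).epi) _
    ⟨colimit.isColimit _⟩
  let P := TreeAut.cointersection (fun j => (hq j).isHom) (colimit.isColimit _) hSc
  have hp : ∀ k, IsQuotAut E (B k) P (WidePushout.ι q k) :=
    isQuotAut_ι_cointersection hfs hq (colimit.isColimit _) hSc
  obtain ⟨g, hpg, hgp⟩ := (hB _ _ (hp j₀)).out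
  refine ⟨WidePushout.ι q j ≫ g, (hp j).isHom.comp ((hp j₀).isHom.inverse hpg hgp), ?_⟩
  have hleg : q j ≫ WidePushout.ι q j = q j₀ ≫ WidePushout.ι q j₀ := by
    rw [WidePushout.arrow_ι, WidePushout.arrow_ι]
  calc q j ≫ WidePushout.ι q j ≫ g = (q j₀ ≫ WidePushout.ι q j₀) ≫ g :=
        (Category.assoc _ _ _).symm.trans (hleg =≫ g)
    _ = q j₀ := (Category.assoc _ _ _).trans ((q j₀ ≫= hpg).trans (Category.comp_id _))

lemma IsSimple.isMinimisation [HasColimitsOfShape (WidePushoutShape (ULift.{max u v} Bool)) C]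
    (hfs : IsFactorizationSystem E M) (hpres : PreservesECointersections E Sg)
    (hq : IsQuotAut E A B q) (hB : IsSimple E B) : IsMinimisation E A B q := by
  refine ⟨hq, fun B' q' hq' => ?_⟩
  let Bs (j : ULift.{max u v} Bool) : TreeAut Sg I O := bif j.down then B else B'
  let qs : ∀ j, A.Q.a ⟶ (Bs j).Q.a := fun | ⟨true⟩ => q | ⟨false⟩ => q'
  have hqs : ∀ j, IsQuotAut E A (Bs j) (qs j) := fun | ⟨true⟩ => hq | ⟨false⟩ => hq'
  obtain ⟨h, hh, hfac⟩ :=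
    hB.exists_isAutHom_comp_eq hfs hpres hqs (j₀ := .up true) (.up false)
  refine ⟨h, ⟨hh, hfac⟩, fun h' ⟨_, hfac'⟩ => ?_⟩
  exact hq'.epi.left_cancellation _ _ (hfac'.trans hfac.symm)

end Minimisation

theorem simple_iff_minimisation_general
    {C : Type u} [Category.{v} C] [HasColimits C]
    (E M : MorphismProperty C) (hfs : IsFactorizationSystem E M)
    {Sg : C ⥤ C} (hpres : PreservesECointersections E Sg)
    {I O : C} (A : TreeAut Sg I O)
    (B : TreeAut Sg I O) (q : A.Q.a ⟶ B.Q.a) (hq : IsQuotAut E A B q) :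
    IsSimple E B ↔ IsMinimisation E A B q :=
  ⟨fun hB => hB.isMinimisation hfs hpres hq, fun hmin => hmin.isSimple hfs⟩

/-- Suppose `Σ` preserves `E`-cointersections, let `(Q,δ,i,o)` be an
automaton with `o ∈ E`, and let `(Q',δ',i',o')`, `q : Q ↠ Q'` be a quotient automaton
of it. Then `(Q',δ',i',o')` is simple iff it is the minimisation of `(Q,δ,i,o)`. -/
theorem simple_iff_minimisation
    {C : Type u} [Category.{v} C] [HasColimits C] (hcwp : Cowellpowered C)
    (E M : MorphismProperty C) (hfs : IsFactorizationSystem E M)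
    (hE : ∀ ⦃X Y : C⦄ (f : X ⟶ Y), E f → Epi f)
    {Sg : C ⥤ C} (hpres : PreservesECointersections E Sg)
    {I O : C} (A : TreeAut Sg I O) (hoE : E A.o)
    (B : TreeAut Sg I O) (q : A.Q.a ⟶ B.Q.a) (hq : IsQuotAut E A B q) :
    IsSimple E B ↔ IsMinimisation E A B q :=
  simple_iff_minimisation_general E M hfs hpres A B q hq

end TreeAutPaper
end

section
/- Let (T,η,μ) be a monad on a category C with Eilenberg–Moore adjunction F ⊣ U : C ⇄ EM(T) and adjoint transpose (−)♯, and suppose T maps reflexive coequalisers to epimorphisms. If i : B → UC (for B in C and C a T-algebra) is such that U(i♯) : TB → UC is a reflexive coequaliser in C of a pair q₁, q₂ : A → TB, then i♯ : FB → C is a reflexive coequaliser in EM(T) of the pair q₁♯, q₂♯ : FA → FB. -/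
/-!
Transposition along `F ⊣ U` turns a common section `s` of `q₁, q₂` into the common section
`F(η_B ≫ s)` of `q₁♯, q₂♯`, and an algebra morphism `s` out of `FB` satisfies `q₁♯ ≫ s = q₂♯ ≫ s`
iff `q₁ ≫ Us = q₂ ≫ Us`. Hence every cofork under `q₁♯, q₂♯` descends uniquely along the
coequaliser `U(i♯)` in `C`, and the descended map is a morphism of algebras because `T(U(i♯))`
is an epimorphism.
-/

open CategoryTheory CategoryTheory.Limits

universe v u

namespace TreeAutPaper

variable {C : Type u} [Category.{v} C]

/-- The adjoint transpose `f♯ : FX ⟶ Y` of `f : X ⟶ UY` for the free–forgetful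
adjunction of the Eilenberg–Moore category of a monad. -/
def transpose (T : Monad C) {X : C} {Y : T.Algebra} (f : X ⟶ Y.A) : T.free.obj X ⟶ Y :=
  ((Monad.adj T).homEquiv X Y).symm f

/-- `T` maps reflexive coequalisers to epimorphisms. -/
def MapsReflexiveCoequalizersToEpis (S : C ⥤ C) : Prop :=
  ∀ {A B X : C} (f g : A ⟶ B) (c : B ⟶ X) (w : f ≫ c = g ≫ c),
    IsReflexivePair f g → Nonempty (IsColimit (Cofork.ofπ c w)) → Epi (S.map c)

/-- `S` preserves reflexive coequalisers. -/
def PreservesReflexiveCoequalizersProp (S : C ⥤ C) : Prop :=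
  ∀ {A B X : C} (f g : A ⟶ B) (c : B ⟶ X) (w : f ≫ c = g ≫ c),
    IsReflexivePair f g → Nonempty (IsColimit (Cofork.ofπ c w)) →
      Nonempty (IsColimit (Cofork.ofπ (S.map c)
        (show S.map f ≫ S.map c = S.map g ≫ S.map c by
          rw [← S.map_comp, ← S.map_comp, w])))

/-- `(R, p₁, p₂)` is the Nerode equivalence of the language `L : TI ⟶ O`. -/
def IsNerode (T : Monad C) {I O : C} (L : (T : C ⥤ C).obj I ⟶ O)
    (R : C) (p₁ p₂ : R ⟶ (T : C ⥤ C).obj I) : Prop :=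
  ((T : C ⥤ C).map p₁ ≫ T.μ.app I ≫ L = (T : C ⥤ C).map p₂ ≫ T.μ.app I ≫ L) ∧
    ∀ (S : C) (q₁ q₂ : S ⟶ (T : C ⥤ C).obj I), IsReflexivePair q₁ q₂ →
      (T : C ⥤ C).map q₁ ≫ T.μ.app I ≫ L = (T : C ⥤ C).map q₂ ≫ T.μ.app I ≫ L →
      ∃! u : S ⟶ R, u ≫ p₁ = q₁ ∧ u ≫ p₂ = q₂

variable (T : Monad C)

/-- A `T`-automaton: an Eilenberg–Moore algebra together with initial and final
state morphisms. -/
structure TAut (I O : C) where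
  Q : T.Algebra
  i : I ⟶ Q.A
  o : Q.A ⟶ O

variable {T} {I O : C}

/-- The reachability map of a `T`-automaton. -/
def TAut.rch (A : TAut T I O) : (T : C ⥤ C).obj I ⟶ A.Q.A :=
  (transpose T A.i).f

/-- The language of a `T`-automaton. -/
def TAut.lang (A : TAut T I O) : (T : C ⥤ C).obj I ⟶ O :=
  A.rch ≫ A.o

/-- `h` is a homomorphism of `T`-automata from `A` to `B`. -/
structure IsTAutHom (A B : TAut T I O) (h : A.Q.A ⟶ B.Q.A) : Prop where
  alg : (T : C ⥤ C).map h ≫ B.Q.a = A.Q.a ≫ h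
  hi : A.i ≫ h = B.i
  ho : h ≫ B.o = A.o

/-- A `T`-automaton is reachable if its reachability map is a reflexive
regular epimorphism, i.e. a coequaliser of a reflexive pair. -/
def TAut.Reachable (A : TAut T I O) : Prop :=
  ∃ (S : C) (q₁ q₂ : S ⟶ (T : C ⥤ C).obj I),
    IsReflexivePair q₁ q₂ ∧
      ∃ w : q₁ ≫ A.rch = q₂ ≫ A.rch, Nonempty (IsColimit (Cofork.ofπ A.rch w))

/-- A `T`-automaton is minimal if it is reachable and every reachable `T`-automaton
with the same language admits a (necessarily unique) homomorphism into it. -/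
def TAut.Minimal (A : TAut T I O) : Prop :=
  A.Reachable ∧ ∀ B : TAut T I O, B.Reachable → B.lang = A.lang →
    ∃! h : B.Q.A ⟶ A.Q.A, IsTAutHom B A h

lemma transpose_comp {X : C} {Y Z : T.Algebra} (f : X ⟶ Y.A) (h : Y ⟶ Z) :
    transpose T f ≫ h = transpose T (f ≫ h.f) :=
  ((Monad.adj T).homEquiv_naturality_right_symm f h).symm

lemma free_map_comp_transpose {X X' : C} {Y : T.Algebra} (g : X' ⟶ X) (f : X ⟶ Y.A) :
    T.free.map g ≫ transpose T f = transpose T (g ≫ f) :=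
  ((Monad.adj T).homEquiv_naturality_left_symm g f).symm

lemma transpose_unit (B : C) : transpose T (Y := T.free.obj B) (T.η.app B) = 𝟙 _ :=
  (Equiv.symm_apply_eq _).mpr (by simp [Adjunction.homEquiv_unit]; exact (Category.comp_id _).symm)

lemma isReflexivePair_transpose {A B : C} {q₁ q₂ : A ⟶ T.obj B}
    (h : IsReflexivePair q₁ q₂) :
    IsReflexivePair (transpose T (Y := T.free.obj B) q₁) (transpose T (Y := T.free.obj B) q₂) := by
  obtain ⟨s, hs₁, hs₂⟩ := h.common_section'
  have hsection {q : A ⟶ T.obj B} (hq : s ≫ q = 𝟙 _) :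
      T.free.map (T.η.app B ≫ s) ≫ transpose T (Y := T.free.obj B) q = 𝟙 _ := by
    have hη : (T.η.app B ≫ s) ≫ q = T.η.app B := by rw [Category.assoc, hq, Category.comp_id]
    exact (free_map_comp_transpose _ _).trans ((congrArg (transpose T) hη).trans (transpose_unit B))
  exact IsReflexivePair.mk' _ (hsection hs₁) (hsection hs₂)

lemma transpose_injective {X : C} {Y : T.Algebra} :
    Function.Injective (transpose T (X := X) (Y := Y)) :=
  ((Monad.adj T).homEquiv X Y).symm.injective

lemma transpose_comp_eq_transpose_comp_iff {A B : C} {Y : T.Algebra} {q₁ q₂ : A ⟶ T.obj B}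
    (s : T.free.obj B ⟶ Y) :
    transpose T (Y := T.free.obj B) q₁ ≫ s = transpose T (Y := T.free.obj B) q₂ ≫ s ↔
      q₁ ≫ s.f = q₂ ≫ s.f := by
  rw [transpose_comp q₁ s, transpose_comp q₂ s]
  exact transpose_injective.eq_iff

lemma Monad.Algebra.map_comp_a_of_comp_eq {X Y Z : T.Algebra} (π : X ⟶ Y) [Epi (T.map π.f)]
    (s : X ⟶ Z) {u : Y.A ⟶ Z.A} (hu : π.f ≫ u = s.f) :
    T.map u ≫ Z.a = Y.a ≫ u := by
  rw [← cancel_epi (T.map π.f), ← Functor.map_comp_assoc, hu, s.h, π.h_assoc, hu]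

def isColimitCoforkOfForget {P Q X : T.Algebra} {f g : P ⟶ Q} (π : Q ⟶ X)
    (w : f ≫ π = g ≫ π) {A : C} {q₁ q₂ : A ⟶ Q.A} (wq : q₁ ≫ π.f = q₂ ≫ π.f)
    (hc : IsColimit (Cofork.ofπ π.f wq)) [Epi (T.map π.f)]
    (hq : ∀ {Y : T.Algebra} (s : Q ⟶ Y), f ≫ s = g ≫ s → q₁ ≫ s.f = q₂ ≫ s.f) :
    IsColimit (Cofork.ofπ π w) :=
  Cofork.IsColimit.mk' _ fun s =>
    let ⟨u, hu⟩ := Cofork.IsColimit.desc' hc s.π.f (hq s.π s.condition)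
    ⟨⟨u, Monad.Algebra.map_comp_a_of_comp_eq π s.π hu⟩, Monad.Algebra.Hom.ext hu,
      fun hm => Monad.Algebra.Hom.ext <| Cofork.IsColimit.hom_ext hc <|
        (congrArg Monad.Algebra.Hom.f hm).trans hu.symm⟩

/-- Suppose `T` maps reflexive coequalisers to epimorphisms. If
`i : B ⟶ UC` is such that `U(i♯)` is a reflexive coequaliser of the pair
`q₁, q₂ : A ⟶ TB` in `C`, then `i♯ : FB ⟶ C` is a reflexive coequaliser of the pair
of transposes `q₁♯, q₂♯ : FA ⟶ FB` in the Eilenberg–Moore category. -/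
theorem transpose_reflexive_coequalizer
    {C : Type u} [Category.{v} C] (T : Monad C)
    (hT : MapsReflexiveCoequalizersToEpis (T : C ⥤ C))
    {A B : C} {X : T.Algebra} (i : B ⟶ X.A)
    (q₁ q₂ : A ⟶ (T : C ⥤ C).obj B) (hrefl : IsReflexivePair q₁ q₂)
    (w : q₁ ≫ (transpose T i).f = q₂ ≫ (transpose T i).f)
    (hcoeq : Nonempty (IsColimit (Cofork.ofπ (transpose T i).f w))) :
    IsReflexivePair (transpose T (Y := T.free.obj B) q₁)
        (transpose T (Y := T.free.obj B) q₂) ∧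
      ∃ w' : transpose T (Y := T.free.obj B) q₁ ≫ transpose T i =
          transpose T (Y := T.free.obj B) q₂ ≫ transpose T i,
        Nonempty (IsColimit (Cofork.ofπ (transpose T i) w')) := by
  obtain ⟨hc⟩ := hcoeq
  have : Epi (T.map (transpose T i).f) := hT q₁ q₂ _ w hrefl ⟨hc⟩
  have w' : transpose T (Y := T.free.obj B) q₁ ≫ transpose T i =
      transpose T (Y := T.free.obj B) q₂ ≫ transpose T i :=
    (transpose_comp_eq_transpose_comp_iff _).mpr w
  exact ⟨isReflexivePair_transpose hrefl, w',
    ⟨isColimitCoforkOfForget _ w' w hc fun s => (transpose_comp_eq_transpose_comp_iff s).mp⟩⟩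

end TreeAutPaper
end

section
/- Let (T,η,μ) be a monad on a category C with coproducts, and let L : TI → O be a language with Nerode equivalence (R, p₁, p₂). Then there exists a unique T-algebra structure u : TR → R on R making p₁ and p₂ T-algebra homomorphisms from (R,u) to (TI,μ_I); moreover p₁ and p₂, as T-algebra homomorphisms, have a common section in the Eilenberg–Moore category. -/
open CategoryTheory CategoryTheory.Limits

universe v u

namespace TreeAutPaper

variable {C : Type u} [Category.{v} C]

variable (T : Monad C)

variable {T} {I O : C}

/-- If `C` has coproducts, then for any Nerode equivalence
`(R, p₁, p₂)` of a language `L : TI ⟶ O` there is a unique `T`-algebra structure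
`u : TR ⟶ R` making `p₁` and `p₂` `T`-algebra homomorphisms `(R,u) → (TI,μ_I)`;
moreover `p₁` and `p₂` have a common section in the Eilenberg–Moore category. -/
theorem nerode_algebra_structure
    {C : Type u} [Category.{v} C] [HasCoproducts.{v} C] (T : Monad C)
    {I O : C} (L : (T : C ⥤ C).obj I ⟶ O)
    (R : C) (p₁ p₂ : R ⟶ (T : C ⥤ C).obj I) (hN : IsNerode T L R p₁ p₂) :
    ∃ u : (T : C ⥤ C).obj R ⟶ R,
      -- `(R,u)` is a `T`-algebra:
      (T.η.app R ≫ u = 𝟙 R) ∧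
      (T.μ.app R ≫ u = (T : C ⥤ C).map u ≫ u) ∧
      -- `p₁` and `p₂` are `T`-algebra homomorphisms `(R,u) → (TI,μ_I)`:
      ((T : C ⥤ C).map p₁ ≫ T.μ.app I = u ≫ p₁) ∧
      ((T : C ⥤ C).map p₂ ≫ T.μ.app I = u ≫ p₂) ∧
      -- `p₁` and `p₂` have a common section in the Eilenberg–Moore category:
      (∃ s : (T : C ⥤ C).obj I ⟶ R,
        ((T : C ⥤ C).map s ≫ u = T.μ.app I ≫ s) ∧ s ≫ p₁ = 𝟙 _ ∧ s ≫ p₂ = 𝟙 _) ∧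
      -- and `u` is the unique such algebra structure:
      (∀ u' : (T : C ⥤ C).obj R ⟶ R,
        (T.η.app R ≫ u' = 𝟙 R) → (T.μ.app R ≫ u' = (T : C ⥤ C).map u' ≫ u') →
        ((T : C ⥤ C).map p₁ ≫ T.μ.app I = u' ≫ p₁) →
        ((T : C ⥤ C).map p₂ ≫ T.μ.app I = u' ≫ p₂) → u' = u) := by
  obtain ⟨eq0, uniq⟩ := hN
  have ηnat : ∀ {X Y : C} (f : X ⟶ Y),
      T.η.app X ≫ (T : C ⥤ C).map f = f ≫ T.η.app Y := fun f => by
    simpa using (T.η.naturality f).symm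
  have μnat : ∀ {X Y : C} (f : X ⟶ Y),
      T.μ.app X ≫ (T : C ⥤ C).map f =
        (T : C ⥤ C).map ((T : C ⥤ C).map f) ≫ T.μ.app Y := fun f => by
    simpa using (T.μ.naturality f).symm
  -- a common section `s` of `p₁` and `p₂`
  obtain ⟨s, ⟨hs1, hs2⟩, -⟩ := uniq _ (𝟙 _) (𝟙 _)
    (IsReflexivePair.mk' (𝟙 _) (Category.comp_id _) (Category.comp_id _)) rfl
  -- conditional joint monomorphy of `(p₁, p₂)`
  have jm : ∀ {X : C} (f g : X ⟶ R), IsReflexivePair (f ≫ p₁) (f ≫ p₂) →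
      f ≫ p₁ = g ≫ p₁ → f ≫ p₂ = g ≫ p₂ → f = g := by
    intro X f g hr h1 h2
    obtain ⟨w, -, huniq⟩ := uniq X (f ≫ p₁) (f ≫ p₂) hr
      (by rw [Functor.map_comp, Functor.map_comp, Category.assoc, Category.assoc, eq0])
    rw [huniq f ⟨rfl, rfl⟩, huniq g ⟨h1.symm, h2.symm⟩]
  -- `s ≫ η` is a common section of the structure pair
  have sec1 : ∀ p : R ⟶ (T : C ⥤ C).obj I, s ≫ p = 𝟙 _ →
      (s ≫ T.η.app R) ≫ (T : C ⥤ C).map p ≫ T.μ.app I = 𝟙 _ := by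
    intro p hp
    simp only [Category.assoc]
    slice_lhs 2 3 => rw [ηnat p]
    slice_lhs 3 4 => rw [T.left_unit I]
    simp [hp]
  -- the key `μ`-computation
  have mu2 : ∀ p : R ⟶ (T : C ⥤ C).obj I,
      T.μ.app R ≫ (T : C ⥤ C).map p ≫ T.μ.app I =
        (T : C ⥤ C).map ((T : C ⥤ C).map p ≫ T.μ.app I) ≫ T.μ.app I := by
    intro p
    rw [Functor.map_comp]
    slice_rhs 2 3 => rw [Monad.assoc]
    slice_lhs 1 2 => rw [μnat p]
    simp
  -- construct the algebra structure `u`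
  obtain ⟨u, ⟨hu1, hu2⟩, uuniq⟩ := uniq _ ((T : C ⥤ C).map p₁ ≫ T.μ.app I)
    ((T : C ⥤ C).map p₂ ≫ T.μ.app I)
    (IsReflexivePair.mk' (s ≫ T.η.app R) (sec1 p₁ hs1) (sec1 p₂ hs2))
    (by slice_lhs 1 2 => rw [← mu2 p₁]
        slice_rhs 1 2 => rw [← mu2 p₂]
        simp only [Category.assoc]
        rw [eq0])
  have f1 : (T.η.app R ≫ u) ≫ p₁ = p₁ := by
    rw [Category.assoc, hu1]
    slice_lhs 1 2 => rw [ηnat p₁]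
    simp
  have f2 : (T.η.app R ≫ u) ≫ p₂ = p₂ := by
    rw [Category.assoc, hu2]
    slice_lhs 1 2 => rw [ηnat p₂]
    simp
  have c1 : (T.μ.app R ≫ u) ≫ p₁ =
      (T : C ⥤ C).map ((T : C ⥤ C).map p₁ ≫ T.μ.app I) ≫ T.μ.app I := by
    rw [Category.assoc, hu1]; exact mu2 p₁
  have c2 : (T.μ.app R ≫ u) ≫ p₂ =
      (T : C ⥤ C).map ((T : C ⥤ C).map p₂ ≫ T.μ.app I) ≫ T.μ.app I := by
    rw [Category.assoc, hu2]; exact mu2 p₂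
  have d1 : ((T : C ⥤ C).map u ≫ u) ≫ p₁ =
      (T : C ⥤ C).map ((T : C ⥤ C).map p₁ ≫ T.μ.app I) ≫ T.μ.app I := by
    rw [Category.assoc, hu1, ← Category.assoc, ← Functor.map_comp, hu1]
  have d2 : ((T : C ⥤ C).map u ≫ u) ≫ p₂ =
      (T : C ⥤ C).map ((T : C ⥤ C).map p₂ ≫ T.μ.app I) ≫ T.μ.app I := by
    rw [Category.assoc, hu2, ← Category.assoc, ← Functor.map_comp, hu2]
  have e1 : ((T : C ⥤ C).map s ≫ u) ≫ p₁ = T.μ.app I := by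
    rw [Category.assoc, hu1, ← Category.assoc, ← Functor.map_comp, hs1]; simp
  have e2 : ((T : C ⥤ C).map s ≫ u) ≫ p₂ = T.μ.app I := by
    rw [Category.assoc, hu2, ← Category.assoc, ← Functor.map_comp, hs2]; simp
  -- common-section computation for the associativity pair
  have g1 : ∀ p : R ⟶ (T : C ⥤ C).obj I, s ≫ p = 𝟙 _ →
      (s ≫ T.η.app R ≫ T.η.app ((T : C ⥤ C).obj R)) ≫
        (T : C ⥤ C).map ((T : C ⥤ C).map p ≫ T.μ.app I) ≫ T.μ.app I = 𝟙 _ := by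
    intro p hp
    simp only [Category.assoc]
    slice_lhs 3 4 => rw [ηnat ((T : C ⥤ C).map p ≫ T.μ.app I)]
    simp only [Category.assoc]
    slice_lhs 5 6 => rw [T.left_unit I]
    slice_lhs 2 3 => rw [ηnat p]
    simp only [Category.assoc, Category.comp_id]
    slice_lhs 3 4 => rw [T.left_unit I]
    simp [hp]
  refine ⟨u, ?_, ?_, hu1.symm, hu2.symm, ⟨s, ?_, hs1, hs2⟩, ?_⟩
  · -- unit law
    refine jm _ (𝟙 R) ?_ ?_ ?_
    · rw [f1, f2]; exact IsReflexivePair.mk' s hs1 hs2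
    · rw [f1]; simp
    · rw [f2]; simp
  · -- associativity law
    refine jm _ _ ?_ (by rw [c1, d1]) (by rw [c2, d2])
    rw [c1, c2]
    exact IsReflexivePair.mk' (s ≫ T.η.app R ≫ T.η.app ((T : C ⥤ C).obj R))
      (g1 p₁ hs1) (g1 p₂ hs2)
  · -- `s` is a homomorphism of algebras
    refine jm _ _ ?_ ?_ ?_
    · rw [e1, e2]
      exact IsReflexivePair.mk' (T.η.app ((T : C ⥤ C).obj I)) (T.left_unit I) (T.left_unit I)
    · rw [e1, Category.assoc, hs1, Category.comp_id]
    · rw [e2, Category.assoc, hs2, Category.comp_id]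
  · -- uniqueness
    intro u' _ _ h1 h2
    exact uuniq u' ⟨h1.symm, h2.symm⟩

end TreeAutPaper
end

section
/- Let (T,η,μ) be a monad on a category C that has coproducts and reflexive coequalisers, and suppose T preserves reflexive coequalisers. Then for every language L : TI → O that has a Nerode equivalence, there exists a minimal T-automaton accepting L. -/
/-!
The Nerode equivalence `p₁, p₂ : R ⟶ TI` is reflexive, hence so is the pair of free algebra
morphisms `μ ∘ T pᵢ : TR ⟶ TI`. Since `T` (and so `TT`) preserves its coequaliser `c : TI ⟶ Q`,
`Q` carries a unique algebra structure making `c` an algebra morphism; with initial state `c ∘ η`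
and output induced by `L` this is a reachable automaton whose reachability map is `c`.
If `B` is reachable with language `L`, its reachability map coequalises a reflexive pair
identified by `L`, which therefore factors through the Nerode equivalence; so `c` factors through
`rch_B`. As `T` preserves the coequaliser `rch_B`, this factorisation is an automaton morphism,
unique because `rch_B` is epi.
-/

open CategoryTheory CategoryTheory.Limits

universe v u

namespace TreeAutPaper

variable {C : Type u} [Category.{v} C]

variable (T : Monad C)

variable {T} {I O : C}

instance isReflexivePair_map {D : Type*} [Category D] (F : C ⥤ D) {A B : C} (f g : A ⟶ B)
    [IsReflexivePair f g] : IsReflexivePair (F.map f) (F.map g) :=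
  IsReflexivePair.mk' (F.map (commonSection f g))
    (by rw [← F.map_comp, section_comp_left, F.map_id])
    (by rw [← F.map_comp, section_comp_right, F.map_id])

lemma PreservesReflexiveCoequalizersProp.epi_map {S : C ⥤ C}
    (hS : PreservesReflexiveCoequalizersProp S) {A B Z : C} {f g : A ⟶ B} [IsReflexivePair f g]
    {c : B ⟶ Z} {w : f ≫ c = g ≫ c} (hc : IsColimit (Cofork.ofπ c w)) : Epi (S.map c) :=
  Cofork.IsColimit.epi (hS f g c w inferInstance ⟨hc⟩).some

lemma PreservesReflexiveCoequalizersProp.epi_map_map {S : C ⥤ C}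
    (hS : PreservesReflexiveCoequalizersProp S) {A B Z : C} {f g : A ⟶ B} [IsReflexivePair f g]
    {c : B ⟶ Z} {w : f ≫ c = g ≫ c} (hc : IsColimit (Cofork.ofπ c w)) :
    Epi (S.map (S.map c)) :=
  hS.epi_map (hS f g c w inferInstance ⟨hc⟩).some

section Transpose

variable {X : C} {Y : T.Algebra}

lemma transpose_f (f : X ⟶ Y.A) : (transpose T f).f = T.map f ≫ Y.a := by
  simp only [transpose, Monad.adj, Adjunction.mkOfHomEquiv_homEquiv, Equiv.symm_mk,
    Equiv.coe_fn_mk]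
  rfl

lemma unit_comp_transpose_f (f : X ⟶ Y.A) : T.η.app X ≫ (transpose T f).f = f := by
  have := ((Monad.adj T).homEquiv X Y).apply_symm_apply f
  rwa [Adjunction.homEquiv_unit, Monad.adj_unit] at this

lemma transpose_unit_comp_f (g : T.free.obj X ⟶ Y) : transpose T (T.η.app X ≫ g.f) = g := by
  have := ((Monad.adj T).homEquiv X Y).symm_apply_apply g
  rwa [Adjunction.homEquiv_unit, Monad.adj_unit] at this

lemma isReflexivePair_transpose_f {f g : X ⟶ Y.A} (hfg : IsReflexivePair f g) :
    IsReflexivePair (transpose T f).f (transpose T g).f :=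
  have cancel (p : X ⟶ Y.A) :
      commonSection f g ≫ T.η.app X ≫ (transpose T p).f = commonSection f g ≫ p := by
    rw [unit_comp_transpose_f]
  IsReflexivePair.mk' (commonSection f g ≫ T.η.app X)
    ((Category.assoc _ _ _).trans ((cancel f).trans (section_comp_left f g)))
    ((Category.assoc _ _ _).trans ((cancel g).trans (section_comp_right f g)))

lemma comp_eq_of_transpose_f_comp_eq {f g : X ⟶ Y.A} {Z : C} {c : Y.A ⟶ Z}
    (h : (transpose T f).f ≫ c = (transpose T g).f ≫ c) : f ≫ c = g ≫ c :=
  calc f ≫ c = (T.η.app X ≫ (transpose T f).f) ≫ c := by rw [unit_comp_transpose_f]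
    _ = T.η.app X ≫ (transpose T f).f ≫ c := Category.assoc _ _ _
    _ = T.η.app X ≫ (transpose T g).f ≫ c := congrArg (T.η.app X ≫ ·) h
    _ = (T.η.app X ≫ (transpose T g).f) ≫ c := (Category.assoc _ _ _).symm
    _ = g ≫ c := by rw [unit_comp_transpose_f]

end Transpose

section QuotientAlgebra

variable {X Y : T.Algebra} {k₁ k₂ : X ⟶ Y} [IsReflexivePair k₁.f k₂.f] {Q : C} {c : Y.A ⟶ Q}
  {w : k₁.f ≫ c = k₂.f ≫ c} (hT : PreservesReflexiveCoequalizersProp (T : C ⥤ C))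
  (hc : IsColimit (Cofork.ofπ c w))

noncomputable def quotientStructureMap : T.obj Q ⟶ Q :=
  Cofork.IsColimit.desc (hT _ _ c w inferInstance ⟨hc⟩).some (Y.a ≫ c)
    (by simp only [Monad.Algebra.Hom.h_assoc, w])

lemma map_comp_quotientStructureMap : T.map c ≫ quotientStructureMap hT hc = Y.a ≫ c :=
  Cofork.IsColimit.π_desc' (hT _ _ c w inferInstance ⟨hc⟩).some _ _

noncomputable def quotientAlgebra : T.Algebra where
  A := Q
  a := quotientStructureMap hT hc
  unit := by
    have : Epi c := Cofork.IsColimit.epi hc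
    rw [← cancel_epi c, T.unit_naturality_assoc, map_comp_quotientStructureMap,
      Y.unit_assoc, Category.comp_id]
  assoc := by
    have := hT.epi_map_map hc
    have quot := map_comp_quotientStructureMap hT hc
    rw [← cancel_epi (T.map (T.map c)), T.mu_naturality_assoc,
      ← Functor.map_comp_assoc, quot, Functor.map_comp_assoc, quot, Y.assoc_assoc]

noncomputable def quotientAlgebra.π : Y ⟶ quotientAlgebra hT hc where
  f := c
  h := map_comp_quotientStructureMap hT hc

end QuotientAlgebra

namespace TAut

variable (A : TAut T I O)

lemma unit_comp_rch : T.η.app I ≫ A.rch = A.i :=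
  unit_comp_transpose_f A.i

lemma map_rch_comp : T.map A.rch ≫ A.Q.a = T.μ.app I ≫ A.rch :=
  (transpose T A.i).h

lemma map_comp_mu_comp_lang {S : C} (r : S ⟶ T.obj I) :
    T.map r ≫ T.μ.app I ≫ A.lang = T.map (r ≫ A.rch) ≫ A.Q.a ≫ A.o := by
  rw [TAut.lang, ← Category.assoc (T.μ.app I), ← map_rch_comp, Functor.map_comp]
  simp only [Category.assoc]

variable {A}

lemma Reachable.epi_rch (hA : A.Reachable) : Epi A.rch := by
  obtain ⟨_, _, _, _, _, ⟨hc⟩⟩ := hA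
  exact Cofork.IsColimit.epi hc

lemma Reachable.epi_map_rch (hT : PreservesReflexiveCoequalizersProp (T : C ⥤ C))
    (hA : A.Reachable) : Epi (T.map A.rch) := by
  obtain ⟨_, _, _, _, _, ⟨hc⟩⟩ := hA
  exact hT.epi_map hc

end TAut

lemma IsTAutHom.rch_comp {A B : TAut T I O} {h : A.Q.A ⟶ B.Q.A} (hh : IsTAutHom A B h) :
    A.rch ≫ h = B.rch := by
  rw [TAut.rch, TAut.rch, transpose_f, transpose_f, Category.assoc, ← hh.alg,
    ← Functor.map_comp_assoc, hh.hi]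

lemma isTAutHom_of_rch_comp {A B : TAut T I O} [Epi A.rch] [Epi (T.map A.rch)]
    (hl : A.lang = B.lang) {h : A.Q.A ⟶ B.Q.A} (hh : A.rch ≫ h = B.rch) : IsTAutHom A B h where
  alg := by
    rw [← cancel_epi (T.map A.rch), ← Functor.map_comp_assoc, hh, B.map_rch_comp,
      reassoc_of% A.map_rch_comp, hh]
  hi := by rw [← A.unit_comp_rch, Category.assoc, hh, B.unit_comp_rch]
  ho := by rw [← cancel_epi A.rch, reassoc_of% hh, ← TAut.lang, ← TAut.lang, hl]

lemma existsUnique_isTAutHom {A B : TAut T I O} [Epi A.rch] [Epi (T.map A.rch)]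
    (hl : A.lang = B.lang) {h : A.Q.A ⟶ B.Q.A} (hh : A.rch ≫ h = B.rch) :
    ∃! h : A.Q.A ⟶ B.Q.A, IsTAutHom A B h :=
  ⟨h, isTAutHom_of_rch_comp hl hh, fun _ hh' => by rw [← cancel_epi A.rch, hh'.rch_comp, hh]⟩

section QuotientTAut

variable (hT : PreservesReflexiveCoequalizersProp (T : C ⥤ C)) {X : T.Algebra}
  {k₁ k₂ : X ⟶ T.free.obj I} [IsReflexivePair k₁.f k₂.f] {Q : C} {c : (T.free.obj I).A ⟶ Q}
  {w : k₁.f ≫ c = k₂.f ≫ c} (hc : IsColimit (Cofork.ofπ c w)) {L : T.obj I ⟶ O}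

noncomputable def quotientTAut (hL : k₁.f ≫ L = k₂.f ≫ L) : TAut T I O where
  Q := quotientAlgebra hT hc
  i := T.η.app I ≫ c
  o := Cofork.IsColimit.desc hc L hL

variable (hL : k₁.f ≫ L = k₂.f ≫ L)

lemma quotientTAut_rch : (quotientTAut hT hc hL).rch = c :=
  congrArg Monad.Algebra.Hom.f (transpose_unit_comp_f (quotientAlgebra.π hT hc))

lemma quotientTAut_lang : (quotientTAut hT hc hL).lang = L := by
  rw [TAut.lang, quotientTAut_rch]
  exact Cofork.IsColimit.π_desc' hc L hL

lemma quotientTAut_reachable : (quotientTAut hT hc hL).Reachable := by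
  refine ⟨_, k₁.f, k₂.f, ‹_›, ?_⟩
  rw [quotientTAut_rch]
  exact ⟨w, ⟨hc⟩⟩

lemma quotientTAut_rch_condition :
    k₁.f ≫ (quotientTAut hT hc hL).rch = k₂.f ≫ (quotientTAut hT hc hL).rch := by
  rw [quotientTAut_rch]
  exact w

end QuotientTAut

namespace IsNerode

variable {L : T.obj I ⟶ O} {R : C} {p₁ p₂ : R ⟶ T.obj I}

lemma isReflexivePair (hN : IsNerode T L R p₁ p₂) : IsReflexivePair p₁ p₂ := by
  obtain ⟨u, ⟨hu₁, hu₂⟩, -⟩ := hN.2 _ (𝟙 _) (𝟙 _)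
    (IsReflexivePair.mk' (𝟙 _) (Category.id_comp _) (Category.id_comp _)) rfl
  exact IsReflexivePair.mk' u hu₁ hu₂

lemma transpose_f_comp_eq (hN : IsNerode T L R p₁ p₂) :
    (transpose T (Y := T.free.obj I) p₁).f ≫ L = (transpose T (Y := T.free.obj I) p₂).f ≫ L := by
  rw [transpose_f (Y := T.free.obj I) p₁, transpose_f (Y := T.free.obj I) p₂]
  exact (Category.assoc _ _ _).trans (hN.1.trans (Category.assoc _ _ _).symm)

lemma exists_rch_comp_eq (hN : IsNerode T L R p₁ p₂) {B : TAut T I O} (hB : B.Reachable)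
    (hBL : B.lang = L) {Z : C} {c : T.obj I ⟶ Z} (hc : p₁ ≫ c = p₂ ≫ c) :
    ∃ h : B.Q.A ⟶ Z, B.rch ≫ h = c := by
  obtain ⟨S, r₁, r₂, hr, w, ⟨hB⟩⟩ := hB
  obtain ⟨v, ⟨rfl, rfl⟩, -⟩ := hN.2 S r₁ r₂ hr
    (by rw [← hBL, B.map_comp_mu_comp_lang, B.map_comp_mu_comp_lang, w])
  exact ⟨Cofork.IsColimit.desc hB c (by rw [Category.assoc, Category.assoc, hc]),
    Cofork.IsColimit.π_desc' hB _ _⟩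

end IsNerode

theorem minimal_exists_of_nerode_general
    {C : Type u} [Category.{v} C] [HasReflexiveCoequalizers C]
    (T : Monad C) (hT : PreservesReflexiveCoequalizersProp (T : C ⥤ C))
    {I O : C} (L : (T : C ⥤ C).obj I ⟶ O)
    (R : C) (p₁ p₂ : R ⟶ (T : C ⥤ C).obj I) (hN : IsNerode T L R p₁ p₂) :
    ∃ A : TAut T I O, A.Minimal ∧ A.lang = L := by
  have := isReflexivePair_transpose_f (Y := T.free.obj I) hN.isReflexivePair
  have hL := hN.transpose_f_comp_eq
  have hA := quotientTAut_lang hT (coequalizerIsCoequalizer _ _) hL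
  refine ⟨_, ⟨quotientTAut_reachable hT _ hL, fun B hB hBA => ?_⟩, hA⟩
  have := hB.epi_rch
  have := hB.epi_map_rch hT
  obtain ⟨h, hh⟩ := hN.exists_rch_comp_eq hB (hBA.trans hA)
    (comp_eq_of_transpose_f_comp_eq (quotientTAut_rch_condition hT _ hL))
  exact existsUnique_isTAutHom hBA hh

/-- If `C` has coproducts and reflexive coequalisers and `T`
preserves reflexive coequalisers, then every language with a Nerode equivalence is
accepted by a minimal `T`-automaton. -/
theorem minimal_exists_of_nerode
    {C : Type u} [Category.{v} C] [HasCoproducts.{v} C] [HasReflexiveCoequalizers C]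
    (T : Monad C) (hT : PreservesReflexiveCoequalizersProp (T : C ⥤ C))
    {I O : C} (L : (T : C ⥤ C).obj I ⟶ O)
    (R : C) (p₁ p₂ : R ⟶ (T : C ⥤ C).obj I) (hN : IsNerode T L R p₁ p₂) :
    ∃ A : TAut T I O, A.Minimal ∧ A.lang = L :=
  minimal_exists_of_nerode_general T hT L R p₁ p₂ hN

end TreeAutPaper
end

section
/- Let Σ : C → C be a functor, S a monad on C with Kleisli adjunction J ⊣ V : C ⇄ Kl(S), and let Σ̄ : Kl(S) → Kl(S) be an extension of Σ (i.e., Σ̄ ∘ J = J ∘ Σ), with corresponding distributive law λ : ΣS ⇒ SΣ. Then the Kleisli adjunction lifts to an adjunction J̄ ⊣ V̄ between Alg(Σ) and Alg(Σ̄), where J̄(Q, δ : ΣQ → Q) = (Q, J(δ) : Σ̄Q ⇸ Q) and V̄(Q, γ : Σ̄Q ⇸ Q) = (SQ, V(γ) ∘ λ_Q : ΣSQ → SQ), and these adjunctions commute with the forgetful functors (the forgetful functor Alg(Σ) → C composed with J̄-source data matches the square J ∘ U = U ∘ J̄ and V ∘ U = U ∘ V̄). -/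
open CategoryTheory CategoryTheory.Limits

universe v u

namespace TreeAutPaper

variable {C : Type u} [Category.{v} C]

/-- The unit axiom of a distributive law `λ : ΣS ⇒ SΣ`. -/
def DistLawUnit (T : Monad C) (Sg : C ⥤ C)
    (l : (T : C ⥤ C) ⋙ Sg ⟶ Sg ⋙ (T : C ⥤ C)) : Prop :=
  ∀ X : C, Sg.map (T.η.app X) ≫ l.app X = T.η.app (Sg.obj X)

/-- The multiplication axiom of a distributive law `λ : ΣS ⇒ SΣ`. -/
def DistLawMult (T : Monad C) (Sg : C ⥤ C)
    (l : (T : C ⥤ C) ⋙ Sg ⟶ Sg ⋙ (T : C ⥤ C)) : Prop :=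
  ∀ X : C, Sg.map (T.μ.app X) ≫ l.app X =
    l.app ((T : C ⥤ C).obj X) ≫ (T : C ⥤ C).map (l.app X) ≫ T.μ.app (Sg.obj X)

/-- The extension `Σ̄ : Kl(S) ⥤ Kl(S)` of `Σ` corresponding to a distributive law
`λ : ΣS ⇒ SΣ`: it acts as `Σ` on objects and sends `f : X ⇸ Y` to `λ_Y ∘ Σf`. -/
def kleisliExtension (T : Monad C) (Sg : C ⥤ C)
    (l : (T : C ⥤ C) ⋙ Sg ⟶ Sg ⋙ (T : C ⥤ C))
    (hη : DistLawUnit T Sg l) (hμ : DistLawMult T Sg l) :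
    Kleisli T ⥤ Kleisli T where
  obj X := Kleisli.mk T (Sg.obj X.of)
  map {X Y} f := Kleisli.Hom.mk (Sg.map f.of ≫ l.app Y.of :
    Sg.obj X.of ⟶ (T : C ⥤ C).obj (Sg.obj Y.of))
  map_id X := Kleisli.hom_ext (hη X.of)
  map_comp {X Y Z} f g := by
    apply Kleisli.hom_ext
    show Sg.map (f.of ≫ (T : C ⥤ C).map g.of ≫ T.μ.app Z.of) ≫ l.app Z.of =
      (Sg.map f.of ≫ l.app Y.of) ≫ (T : C ⥤ C).map (Sg.map g.of ≫ l.app Z.of) ≫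
        T.μ.app (Sg.obj Z.of)
    have hnat : Sg.map ((T : C ⥤ C).map g.of) ≫ l.app ((T : C ⥤ C).obj Z.of) =
        l.app Y.of ≫ (T : C ⥤ C).map (Sg.map g.of) := l.naturality g.of
    rw [Functor.map_comp, Functor.map_comp, Category.assoc, Category.assoc, hμ Z.of,
      ← Category.assoc (Sg.map ((T : C ⥤ C).map g.of)), hnat]
    simp [Functor.map_comp]

end TreeAutPaper

/-!
An adjunction `F ⊣ G` together with an isomorphism `α : F ∘ Φ ≅ Ψ ∘ F` lifts to algebras:
`F` sends `(Q, δ)` to `(F Q, F δ ∘ α⁻¹)` and `G` sends `(R, γ)` to `(G R, G γ ∘ α♯)`, where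
`α♯ : Φ ∘ G ⇒ G ∘ Ψ` is the mate of `α`. The transpose of `α ≫ Ψ f` is `Φ f♭ ≫ α♯`, so
transposition carries the algebra-morphism square of `f : F Q ⟶ R` to that of `f♭ : Q ⟶ G R`.
For the Kleisli adjunction, `Σ̄` extends `Σ` on the nose, `α` is the identity and its mate is `λ`.
-/

namespace CategoryTheory

open Category

universe v₁ v₂ u₁ u₂

variable {C : Type u₁} [Category.{v₁} C] {D : Type u₂} [Category.{v₂} D]

def Functor.mapAlgebra (F : C ⥤ D) {Φ : C ⥤ C} {Ψ : D ⥤ D} (β : F ⋙ Ψ ⟶ Φ ⋙ F) :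
    Endofunctor.Algebra Φ ⥤ Endofunctor.Algebra Ψ where
  obj Q := ⟨F.obj Q.a, β.app Q.a ≫ F.map Q.str⟩
  map {Q R} f :=
    { f := F.map f.f
      h := by
        have := β.naturality f.f
        dsimp at this ⊢
        rw [reassoc_of% this, ← F.map_comp, f.h, F.map_comp, assoc] }

theorem Functor.mapAlgebra_comp_forget (F : C ⥤ D) {Φ : C ⥤ C} {Ψ : D ⥤ D}
    (β : F ⋙ Ψ ⟶ Φ ⋙ F) :
    F.mapAlgebra β ⋙ Endofunctor.Algebra.forget Ψ = Endofunctor.Algebra.forget Φ ⋙ F :=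
  rfl

theorem Monad.η_app_comp_map_comp_μ_app (T : Monad C) {X Y : C} (g : X ⟶ T.obj Y) :
    T.η.app X ≫ T.map g ≫ T.μ.app Y = g := by
  rw [← T.η.naturality_assoc, Functor.id_map, T.left_unit, comp_id]

namespace Adjunction

variable {F : C ⥤ D} {G : D ⥤ C} (adj : F ⊣ G) {Φ : C ⥤ C} {Ψ : D ⥤ D}

theorem homEquiv_app_comp_map (α : TwoSquare Φ F F Ψ) {X : C} {Y : D} (f : F.obj X ⟶ Y) :
    adj.homEquiv _ _ (α.natTrans.app X ≫ Ψ.map f) =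
      Φ.map (adj.homEquiv _ _ f) ≫ (mateEquiv adj adj α).natTrans.app Y := by
  have := (mateEquiv adj adj α).naturality f
  dsimp at this
  rw [homEquiv_unit, homEquiv_unit, Φ.map_comp, assoc, this, ← assoc, unit_mateEquiv,
    assoc, G.map_comp]
  rfl

theorem mateEquiv_app_eq_homEquiv (α : TwoSquare Φ F F Ψ) (Y : D) :
    (mateEquiv adj adj α).natTrans.app Y =
      adj.homEquiv _ _ (α.natTrans.app (G.obj Y) ≫ Ψ.map (adj.counit.app Y)) := by
  rw [homEquiv_app_comp_map, homEquiv_unit, right_triangle_components, Φ.map_id, id_comp]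
  rfl

-- `TwoSquare` is a def, so the mate of a bare `α.hom` is ill-typed up to reducible unfolding and
-- `rw` rejects every goal containing it; wrapping the argument in `.mk _ _ _ _` avoids this.
theorem mapAlgebra_hom_iff (α : Φ ⋙ F ≅ F ⋙ Ψ) {Q : Endofunctor.Algebra Φ}
    {R : Endofunctor.Algebra Ψ} {f : F.obj Q.a ⟶ R.a} {g : Q.a ⟶ G.obj R.a}
    (hfg : adj.homEquiv _ _ f = g) :
    Ψ.map f ≫ R.str = (α.inv.app Q.a ≫ F.map Q.str) ≫ f ↔
      Φ.map g ≫ (mateEquiv adj adj (.mk _ _ _ _ α.hom)).natTrans.app R.a ≫ G.map R.str =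
        Q.str ≫ g := by
  subst hfg
  have transpose : adj.homEquiv _ _ (α.hom.app Q.a ≫ Ψ.map f ≫ R.str) =
      Φ.map (adj.homEquiv _ _ f) ≫ (mateEquiv adj adj (.mk _ _ _ _ α.hom)).natTrans.app R.a ≫
        G.map R.str := by
    rw [← assoc, homEquiv_naturality_right, adj.homEquiv_app_comp_map (.mk _ _ _ _ α.hom), assoc]
  rw [← transpose, ← homEquiv_naturality_left, Equiv.apply_eq_iff_eq, assoc, ← Iso.app_inv,
    Iso.eq_inv_comp, Iso.app_hom]

def mapAlgebra (α : Φ ⋙ F ≅ F ⋙ Ψ) :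
    F.mapAlgebra α.inv ⊣ G.mapAlgebra (mateEquiv adj adj (.mk _ _ _ _ α.hom)).natTrans :=
  Adjunction.mkOfHomEquiv
    { homEquiv := fun Q R =>
        { toFun := fun f => ⟨adj.homEquiv _ _ f.f, (adj.mapAlgebra_hom_iff α rfl).1 f.h⟩
          invFun := fun g => ⟨(adj.homEquiv _ _).symm g.f,
            (adj.mapAlgebra_hom_iff α (Equiv.apply_symm_apply _ _)).2 g.h⟩
          left_inv := fun f => by ext; exact Equiv.symm_apply_apply _ _
          right_inv := fun g => by ext; exact Equiv.apply_symm_apply _ _ }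
      homEquiv_naturality_left_symm := fun f g => by
        ext; exact adj.homEquiv_naturality_left_symm f.f g.f
      homEquiv_naturality_right := fun f g => by
        ext; exact adj.homEquiv_naturality_right f.f g.f }

end Adjunction

end CategoryTheory

open CategoryTheory Category

namespace TreeAutPaper

section KleisliExtension

variable {C : Type u} [Category.{v} C] (T : Monad C) (Sg : C ⥤ C)
  (l : (T : C ⥤ C) ⋙ Sg ⟶ Sg ⋙ (T : C ⥤ C)) (hη : DistLawUnit T Sg l) (hμ : DistLawMult T Sg l)

def toKleisliCompKleisliExtensionIso :
    Sg ⋙ Kleisli.Adjunction.toKleisli T ≅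
      Kleisli.Adjunction.toKleisli T ⋙ kleisliExtension T Sg l hη hμ :=
  NatIso.ofComponents (fun _ => Iso.refl _) fun {X Y} f => by
    ext
    show (Sg.map f ≫ T.η.app (Sg.obj Y)) ≫ T.map (T.η.app (Sg.obj Y)) ≫ T.μ.app (Sg.obj Y) =
      T.η.app (Sg.obj X) ≫ T.map (Sg.map (f ≫ T.η.app Y) ≫ l.app Y) ≫ T.μ.app (Sg.obj Y)
    rw [Sg.map_comp, assoc (Sg.map f) (Sg.map (T.η.app Y)), hη, T.η_app_comp_map_comp_μ_app]
    simp only [T.right_unit, Functor.id_obj, Category.comp_id]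

theorem mateEquiv_toKleisliCompKleisliExtensionIso_app (X : Kleisli T) :
    (mateEquiv (Kleisli.Adjunction.adj T) (Kleisli.Adjunction.adj T)
      (.mk _ _ _ _ (toKleisliCompKleisliExtensionIso T Sg l hη hμ).hom)).natTrans.app X =
      l.app X.of := by
  rw [Adjunction.mateEquiv_app_eq_homEquiv, Adjunction.homEquiv_unit]
  show T.η.app _ ≫ T.map (T.η.app _ ≫ T.map (Sg.map (𝟙 _) ≫ l.app X.of) ≫ T.μ.app _) ≫
    T.μ.app _ = l.app X.of
  rw [T.η_app_comp_map_comp_μ_app, T.η_app_comp_map_comp_μ_app, Sg.map_id, id_comp]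

end KleisliExtension

/-- The Kleisli adjunction `J ⊣ V : C ⇄ Kl(S)` lifts to an
adjunction `J̄ ⊣ V̄` between `Alg(Σ)` and `Alg(Σ̄)`, where `Σ̄` is the extension of `Σ`
corresponding to the distributive law `λ`; on objects `J̄(Q,δ) = (Q, J(δ))` and
`V̄(Q,γ) = (SQ, V(γ) ∘ λ_Q)`, and the lifted adjunction commutes with the forgetful
functors. -/
theorem kleisli_adjunction_lifts
    {C : Type u} [Category.{v} C] (T : Monad C) (Sg : C ⥤ C)
    (l : (T : C ⥤ C) ⋙ Sg ⟶ Sg ⋙ (T : C ⥤ C))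
    (hη : DistLawUnit T Sg l) (hμ : DistLawMult T Sg l) :
    ∃ (Jb : Endofunctor.Algebra Sg ⥤ Endofunctor.Algebra (kleisliExtension T Sg l hη hμ))
      (Vb : Endofunctor.Algebra (kleisliExtension T Sg l hη hμ) ⥤ Endofunctor.Algebra Sg)
      (_adj : Jb ⊣ Vb),
      -- on objects, `J̄(Q,δ) = (Q, J(δ))` :
      (∀ Q : Endofunctor.Algebra Sg,
        Jb.obj Q = ⟨Kleisli.mk T Q.a, (Kleisli.Adjunction.toKleisli T).map Q.str⟩) ∧
      -- on objects, `V̄(Q,γ) = (SQ, V(γ) ∘ λ_Q)` :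
      (∀ Q : Endofunctor.Algebra (kleisliExtension T Sg l hη hμ),
        Vb.obj Q = ⟨(T : C ⥤ C).obj Q.a.of,
          l.app Q.a.of ≫ (T : C ⥤ C).map Q.str.of ≫ T.μ.app Q.a.of⟩) ∧
      -- the lifted adjunction commutes with the forgetful functors:
      (Jb ⋙ Endofunctor.Algebra.forget (kleisliExtension T Sg l hη hμ) =
        Endofunctor.Algebra.forget Sg ⋙ Kleisli.Adjunction.toKleisli T) ∧
      (Vb ⋙ Endofunctor.Algebra.forget Sg =
        Endofunctor.Algebra.forget (kleisliExtension T Sg l hη hμ) ⋙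
          Kleisli.Adjunction.fromKleisli T) :=
  ⟨_, _, (Kleisli.Adjunction.adj T).mapAlgebra (toKleisliCompKleisliExtensionIso T Sg l hη hμ),
    fun _ => congrArg (Endofunctor.Algebra.mk _) (Category.id_comp _),
    fun Q => congrArg (fun s => Endofunctor.Algebra.mk _ (s ≫ _))
      (mateEquiv_toKleisliCompKleisliExtensionIso_app T Sg l hη hμ Q.a),
    Functor.mapAlgebra_comp_forget _ _, Functor.mapAlgebra_comp_forget _ _⟩

end TreeAutPaper
end
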